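/- Let \mu be a compactly supported Borel probability measure with finite quasi-upper Assouad dimension. Then the functions \theta \mapsto \underline{dim}_A^{=\theta}\mu and \theta \mapsto \overline{dim}_A^{=\theta}\mu are continuous on (0,1), and moreover lim_{\theta\to 1} \underline{dim}_A^{=\theta}\mu = dim_{qL}\mu and lim_{\theta\to 1} \overline{dim}_A^{=\theta}\mu = dim_{qA}\mu. -/

import Mathlib

open MeasureTheory Metric Set Filter
open scoped ENNReal

def msupp {X : Type*} [MetricSpace X] [MeasurableSpace X] (μ : Measure X) : Set X :=
  {x | ∀ r > 0, 0 < μ (ball x r)}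

def lowerHSet {X : Type*} [MetricSpace X] [MeasurableSpace X] (μ : Measure X) (δ : ℝ) : Set ℝ :=
  {s | 0 ≤ s ∧ ∃ c₁ > (0:ℝ), ∃ c₂ > (0:ℝ), ∀ x ∈ msupp μ, ∀ r R : ℝ,
    0 < r → 0 < R → r ≤ R ^ (1 + δ) → R ^ (1 + δ) ≤ c₁ →
    c₂ * (R / r) ^ s * (μ (ball x r)).toReal ≤ (μ (ball x R)).toReal}

def upperHSet {X : Type*} [MetricSpace X] [MeasurableSpace X] (μ : Measure X) (δ : ℝ) : Set ℝ :=
  {s | 0 ≤ s ∧ ∃ c₁ > (0:ℝ), ∃ c₂ > (0:ℝ), ∀ x ∈ msupp μ, ∀ r R : ℝ,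
    0 < r → 0 < R → r ≤ R ^ (1 + δ) → R ^ (1 + δ) ≤ c₁ →
    (μ (ball x R)).toReal ≤ c₂ * (R / r) ^ s * (μ (ball x r)).toReal}

noncomputable def dimqL {X : Type*} [MetricSpace X] [MeasurableSpace X] (μ : Measure X) : ℝ :=
  ⨅ δ : {δ : ℝ // 0 < δ}, sSup (lowerHSet μ δ.1)

noncomputable def dimqA {X : Type*} [MetricSpace X] [MeasurableSpace X] (μ : Measure X) : ℝ :=
  ⨆ δ : {δ : ℝ // 0 < δ}, sInf (upperHSet μ δ.1)

noncomputable def upperEq {X : Type*} [MetricSpace X] [MeasurableSpace X]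
    (μ : Measure X) (θ : ℝ) : ℝ :=
  sInf {s | 0 ≤ s ∧ ∃ c > (0:ℝ), ∃ R₀ > (0:ℝ), ∀ x ∈ msupp μ, ∀ R : ℝ, 0 < R → R ≤ R₀ →
    (μ (ball x R)).toReal ≤ c * (R ^ (1 - 1 / θ)) ^ s * (μ (ball x (R ^ (1 / θ)))).toReal}

noncomputable def lowerEq {X : Type*} [MetricSpace X] [MeasurableSpace X]
    (μ : Measure X) (θ : ℝ) : ℝ :=
  sSup {s | 0 ≤ s ∧ ∃ c > (0:ℝ), ∃ R₀ > (0:ℝ), ∀ x ∈ msupp μ, ∀ R : ℝ, 0 < R → R ≤ R₀ →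
    c * (R ^ (1 - 1 / θ)) ^ s * (μ (ball x (R ^ (1 / θ)))).toReal ≤ (μ (ball x R)).toReal}

/-!
Write `t = 1/θ`, so that the spectra at `θ` compare `μ(B(x,R))` with `μ(B(x,R^t))`.

Continuity. The quasi-Assouad bound `μ(B(x,R)) ≲ R^{-η} (R/r)^D μ(B(x,r))` (for `r ≤ R`)
compares the masses at the scales `R^t` and `R^{t'}` at the cost of a factor
`R^{-D|t-t'|-η}`. Hence an exponent `s` at `t` yields every exponent `s'` at `t'` with
`(t-1) s + D|t-t'| < (t'-1) s'`, so `t ↦ (t-1)·dim(t)` is `D`-Lipschitz on `(1, ∞)`, for both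
the upper and the lower spectrum.

Limits. Taking `r = R^t` in the quasi-Assouad conditions with `δ = t-1` shows that the upper
spectrum is at most `dim_qA` and the lower one at least `dim_qL`. Conversely, for fixed `δ`, the
spectrum bound at `t` is iterated along the scales `R, R^t, R^{t^2}, …` down to the last one
`ρ ≥ r`; since `r ≤ R^{1+δ}`, the ratio `ρ/r ≤ ρ^{1-t}` costs at most `(t-1) D (1+δ)/δ` in the
exponent (for the lower spectrum `(t-1) s (1+δ)/δ`, where `s ≤ D` because lower exponents lie
below upper ones), which tends to `0` as `t → 1`.
-/

open Topology

lemma eventually_nhdsGT_zero_iff {P : ℝ → Prop} :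
    (∀ᶠ R in 𝓝[>] 0, P R) ↔ ∃ R₀ > 0, ∀ R, 0 < R → R ≤ R₀ → P R := by
  simp only [(nhdsGT_basis_Ioc (0 : ℝ)).eventually_iff, mem_Ioc, and_imp, gt_iff_lt]

lemma Filter.Eventually.forall_Ioc_nhdsGT_zero {P : ℝ → Prop} (h : ∀ᶠ R in 𝓝[>] 0, P R) :
    ∀ᶠ R in 𝓝[>] 0, ∀ ρ ∈ Ioc 0 R, P ρ := by
  obtain ⟨R₀, hR₀, hP⟩ := eventually_nhdsGT_zero_iff.1 h
  exact eventually_nhdsGT_zero_iff.2 ⟨R₀, hR₀, fun R _ hR ρ hρ => hP ρ hρ.1 (hρ.2.trans hR)⟩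

lemma eventually_rpow_le {c p : ℝ} (hc : 0 < c) (hp : 0 < p) : ∀ᶠ R in 𝓝[>] 0, R ^ p ≤ c :=
  eventually_nhdsGT_zero_iff.2 ⟨c ^ p⁻¹, by positivity, fun R hR hRc =>
    (Real.le_rpow_inv_iff_of_pos hR.le hc.le hp).1 hRc⟩

lemma exists_rpow_pow_lt_le {R r t : ℝ} (hR0 : 0 < R) (hR1 : R < 1) (hr : 0 < r) (hrR : r ≤ R)
    (ht : 1 < t) : ∃ k : ℕ, R ^ t ^ (k + 1) < r ∧ r ≤ R ^ t ^ k := by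
  have hr_eq : R ^ Real.logb R r = r := Real.rpow_logb hR0 hR1.ne hr
  have hlog : 1 ≤ Real.logb R r := by
    rwa [← Real.rpow_le_rpow_left_iff_of_base_lt_one hR0 hR1, Real.rpow_one, hr_eq]
  obtain ⟨k, hk, hk'⟩ := exists_nat_pow_near hlog ht
  refine ⟨k, ?_, ?_⟩ <;> rw [← hr_eq]
  · exact (Real.rpow_lt_rpow_left_iff_of_base_lt_one hR0 hR1).2 hk'
  · exact (Real.rpow_le_rpow_left_iff_of_base_lt_one hR0 hR1).2 hk

lemma self_div_rpow_rpow {x t s : ℝ} (hx : 0 < x) : (x / x ^ t) ^ s = x ^ ((1 - t) * s) := by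
  rw [Real.rpow_mul hx.le, Real.rpow_sub hx, Real.rpow_one]

lemma rpow_neg_le_div_rpow {r R δ a : ℝ} (hr : 0 < r) (hR : 0 < R) (hδ : 0 < δ)
    (hrR : r ≤ R ^ (1 + δ)) (ha : 0 ≤ a) : r ^ (-a) ≤ (R / r) ^ (a * ((1 + δ) / δ)) := by
  have hroot : r ^ (1 + δ)⁻¹ ≤ R := (Real.rpow_inv_le_iff_of_pos hr.le hR.le (by linarith)).2 hrR
  have hbase : r ^ (-(δ / (1 + δ))) ≤ R / r := by
    rw [le_div_iff₀ hr]
    calc r ^ (-(δ / (1 + δ))) * r = r ^ (1 + δ)⁻¹ := by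
          rw [← Real.rpow_add_one hr.ne']; congr 1; field_simp; ring
      _ ≤ R := hroot
  calc r ^ (-a) = (r ^ (-(δ / (1 + δ)))) ^ (a * ((1 + δ) / δ)) := by
        rw [← Real.rpow_mul hr.le]; congr 1; field_simp
    _ ≤ (R / r) ^ (a * ((1 + δ) / δ)) := by gcongr

lemma div_rpow_mul_rpow_mul_div_rpow_le {R ρ r t δ σ η D : ℝ} (hr : 0 < r) (hrρ : r ≤ ρ)
    (hρt : ρ ^ t < r) (hR : 0 < R) (hrR : r ≤ R ^ (1 + δ)) (hδ : 0 < δ) (ht : 1 ≤ t)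
    (hσ : 0 ≤ σ) (hη : 0 ≤ η) (hD : 0 ≤ D) :
    (R / ρ) ^ σ * ρ ^ (-η) * (ρ / r) ^ D ≤ (R / r) ^ (σ + (η + (t - 1) * D) * ((1 + δ) / δ)) := by
  have hρ : 0 < ρ := hr.trans_le hrρ
  have hloss : ρ ^ (-η) * (ρ / r) ^ D ≤ r ^ (-(η + (t - 1) * D)) :=
    calc ρ ^ (-η) * (ρ / r) ^ D ≤ ρ ^ (-η) * (ρ / ρ ^ t) ^ D := by gcongr
      _ = ρ ^ (-(η + (t - 1) * D)) := by
        rw [self_div_rpow_rpow hρ, ← Real.rpow_add hρ]; ring_nf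
      _ ≤ r ^ (-(η + (t - 1) * D)) :=
        Real.rpow_le_rpow_of_nonpos hr hrρ (by nlinarith)
  calc (R / ρ) ^ σ * ρ ^ (-η) * (ρ / r) ^ D = (R / ρ) ^ σ * (ρ ^ (-η) * (ρ / r) ^ D) := by ring
    _ ≤ (R / r) ^ σ * (R / r) ^ ((η + (t - 1) * D) * ((1 + δ) / δ)) := by
        gcongr
        exact hloss.trans (rpow_neg_le_div_rpow hr hR hδ hrR (by nlinarith))
    _ = _ := (Real.rpow_add (by positivity) _ _).symm

lemma div_rpow_le_div_rpow_of_rpow_lt {R ρ r t δ σ : ℝ} (hr : 0 < r) (hrρ : r ≤ ρ)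
    (hρt : ρ ^ t < r) (hR : 0 < R) (hrR : r ≤ R ^ (1 + δ)) (hδ : 0 < δ) (ht : 1 ≤ t)
    (hσ : 0 ≤ σ) : (R / r) ^ (σ - σ * (t - 1) * ((1 + δ) / δ)) ≤ (R / ρ) ^ σ := by
  have hρ : 0 < ρ := hr.trans_le hrρ
  have hgain : (R / r) ^ (-(σ * (t - 1) * ((1 + δ) / δ))) ≤ (r / ρ) ^ σ := by
    have h := rpow_neg_le_div_rpow hr hR hδ hrR (a := σ * (t - 1)) (by nlinarith)
    rw [Real.rpow_neg hr.le] at h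
    rw [Real.rpow_neg (by positivity)]
    calc ((R / r) ^ (σ * (t - 1) * ((1 + δ) / δ)))⁻¹ ≤ r ^ (σ * (t - 1)) :=
          (inv_le_comm₀ (by positivity) (by positivity)).1 h
      _ ≤ ρ ^ (σ * (t - 1)) := by gcongr
      _ = (ρ ^ t / ρ) ^ σ := by rw [← Real.rpow_sub_one hρ.ne', ← Real.rpow_mul hρ.le]; ring_nf
      _ ≤ (r / ρ) ^ σ := by gcongr
  calc (R / r) ^ (σ - σ * (t - 1) * ((1 + δ) / δ))
      = (R / r) ^ σ * (R / r) ^ (-(σ * (t - 1) * ((1 + δ) / δ))) := by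
        rw [← Real.rpow_add (by positivity)]; ring_nf
    _ ≤ (R / r) ^ σ * (r / ρ) ^ σ := by gcongr
    _ = (R / ρ) ^ σ := by
        rw [← Real.mul_rpow (by positivity) (by positivity), div_mul_div_cancel₀ hr.ne']

lemma le_div_rpow_pow_mul_of_forall_Ioc {F : ℝ → ℝ} {t σ R : ℝ} (ht : 1 ≤ t) (hR0 : 0 < R)
    (hR1 : R ≤ 1) (h : ∀ ρ ∈ Ioc 0 R, F ρ ≤ (ρ / ρ ^ t) ^ σ * F (ρ ^ t)) (k : ℕ) :
    F R ≤ (R / R ^ t ^ k) ^ σ * F (R ^ t ^ k) := by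
  induction k with
  | zero => simp [div_self hR0.ne']
  | succ k ih =>
    set ρ := R ^ t ^ k
    have hρ : ρ ∈ Ioc 0 R :=
      ⟨by positivity, Real.rpow_le_self_of_le_one hR0.le hR1 (one_le_pow₀ ht)⟩
    have hnext : R ^ t ^ (k + 1) = ρ ^ t := by rw [pow_succ, Real.rpow_mul hR0.le]
    calc F R ≤ (R / ρ) ^ σ * F ρ := ih
      _ ≤ (R / ρ) ^ σ * ((ρ / ρ ^ t) ^ σ * F (ρ ^ t)) := by gcongr; exact h ρ hρ
      _ = (R / R ^ t ^ (k + 1)) ^ σ * F (R ^ t ^ (k + 1)) := by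
        rw [hnext, ← mul_assoc, ← Real.mul_rpow (by positivity) (by positivity),
          div_mul_div_cancel₀ hρ.1.ne']

lemma mul_csInf_le_of_forall_mem {A B : Set ℝ} {a b K : ℝ} (hA : A.Nonempty)
    (hA0 : ∀ s ∈ A, 0 ≤ s) (hB : BddBelow B) (ha : 0 < a) (hb : 0 < b) (hK : 0 ≤ K)
    (h : ∀ s ∈ A, ∀ ξ > 0, ∀ s', 0 ≤ s' → a * s + K + ξ ≤ b * s' → s' ∈ B) :
    b * sInf B ≤ a * sInf A + K := by
  refine le_of_forall_pos_le_add fun ξ hξ => ?_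
  have hbound : ∀ s ∈ A, (b * sInf B - K - ξ) / a ≤ s := fun s hs => by
    have hmem := h s hs ξ hξ ((a * s + K + ξ) / b) (by have := hA0 s hs; positivity)
      (by rw [mul_div_cancel₀ _ hb.ne'])
    have := mul_le_mul_of_nonneg_left (csInf_le hB hmem) hb.le
    rw [mul_div_cancel₀ _ hb.ne'] at this
    rw [div_le_iff₀' ha]; linarith
  have := le_csInf hA hbound
  rw [div_le_iff₀' ha] at this; linarith

lemma mul_csSup_le_of_forall_mem {A B : Set ℝ} {a b K : ℝ} (hA : A.Nonempty) (hB : BddAbove B)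
    (hB0 : 0 ∈ B) (ha : 0 < a) (hb : 0 < b)
    (h : ∀ s ∈ A, ∀ ξ > 0, ∀ s', 0 ≤ s' → b * s' + K + ξ ≤ a * s → s' ∈ B) :
    a * sSup A ≤ b * sSup B + K := by
  refine le_of_forall_pos_le_add fun ξ hξ => ?_
  have hbound : ∀ s ∈ A, s ≤ (b * sSup B + K + ξ) / a := fun s hs => by
    rw [le_div_iff₀' ha]
    rcases le_or_gt 0 (a * s - K - ξ) with hpos | hneg
    · have hmem := h s hs ξ hξ ((a * s - K - ξ) / b) (by positivity)
        (by rw [mul_div_cancel₀ _ hb.ne']; linarith)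
      have := mul_le_mul_of_nonneg_left (le_csSup hB hmem) hb.le
      rw [mul_div_cancel₀ _ hb.ne'] at this; linarith
    · have := mul_nonneg hb.le (le_csSup hB hB0); linarith
  have := csSup_le hA hbound
  rw [le_div_iff₀' ha] at this; linarith

lemma continuousOn_of_sub_one_mul_le {F : ℝ → ℝ} {D : ℝ} (hD : 0 ≤ D)
    (h : ∀ t ∈ Ioi (1 : ℝ), ∀ t' ∈ Ioi (1 : ℝ), (t - 1) * F t ≤ (t' - 1) * F t' + D * dist t t') :
    ContinuousOn F (Ioi 1) := by
  have hψ : ContinuousOn (fun t => (t - 1) * F t) (Ioi 1) :=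
    (LipschitzOnWith.of_le_add_mul ⟨D, hD⟩ h).continuousOn
  refine (hψ.div (continuousOn_id.sub continuousOn_const) fun t ht => (sub_pos.2 ht).ne').congr
    fun t ht => ?_
  show F t = (t - 1) * F t / (t - 1)
  field_simp [(sub_pos.2 (show 1 < t from ht)).ne']

lemma tendsto_nhdsGT_one_of_le_of_forall_lt {f : ℝ → ℝ} {L : ℝ} (hle : ∀ t > 1, f t ≤ L)
    (hlt : ∀ a < L, ∃ b > a, ∃ K, ∀ t > 1, b - (t - 1) * K ≤ f t) :
    Tendsto f (𝓝[>] 1) (𝓝 L) := by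
  refine tendsto_order.2 ⟨fun a ha => ?_, fun a ha => ?_⟩
  · obtain ⟨b, hab, K, hb⟩ := hlt a ha
    have hcont : Tendsto (fun t : ℝ => b - (t - 1) * K) (𝓝[>] 1) (𝓝 b) := by
      have : Continuous fun t : ℝ => b - (t - 1) * K := by fun_prop
      simpa using (this.tendsto 1).mono_left nhdsWithin_le_nhds
    filter_upwards [hcont.eventually (lt_mem_nhds hab), self_mem_nhdsWithin] with t hat ht
    exact hat.trans_le (hb t ht)
  · filter_upwards [self_mem_nhdsWithin] with t ht using (hle t ht).trans_lt ha

lemma tendsto_nhdsGT_one_of_ge_of_forall_gt {f : ℝ → ℝ} {L : ℝ} (hge : ∀ t > 1, L ≤ f t)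
    (hgt : ∀ a > L, ∃ b < a, ∃ K, ∀ t > 1, f t ≤ b + (t - 1) * K) :
    Tendsto f (𝓝[>] 1) (𝓝 L) := by
  have := tendsto_nhdsGT_one_of_le_of_forall_lt (f := fun t => -f t) (L := -L)
    (fun t ht => neg_le_neg (hge t ht)) fun a ha => by
      obtain ⟨b, hb, K, h⟩ := hgt (-a) (by linarith)
      exact ⟨-b, by linarith, K, fun t ht => by linarith [h t ht]⟩
  simpa using this.neg

section

variable {X : Type*} [MetricSpace X] [MeasurableSpace X] {μ : Measure X}

def ballMass (μ : Measure X) (x : X) (r : ℝ) : ℝ := (μ (ball x r)).toReal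

lemma ballMass_nonneg (μ : Measure X) (x : X) (r : ℝ) : 0 ≤ ballMass μ x r :=
  ENNReal.toReal_nonneg

@[gcongr]
lemma ballMass_mono [IsFiniteMeasure μ] (x : X) {r r' : ℝ} (h : r ≤ r') :
    ballMass μ x r ≤ ballMass μ x r' :=
  ENNReal.toReal_mono (measure_ne_top μ _) (measure_mono (ball_subset_ball h))

lemma ballMass_pos [IsFiniteMeasure μ] {x : X} (hx : x ∈ msupp μ) {r : ℝ} (hr : 0 < r) :
    0 < ballMass μ x r :=
  ENNReal.toReal_pos (hx r hr).ne' (measure_ne_top μ _)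

-- The sets of `upperEq` / `lowerEq` at `θ = 1/t`, with `(R ^ (1 - t)) ^ s` written as
-- `R ^ ((1 - t) * s)` and `∃ R₀ > 0, ∀ R ∈ (0, R₀]` as `∀ᶠ R in 𝓝[>] 0`.
def upperSpecSet (μ : Measure X) (t : ℝ) : Set ℝ :=
  {s | 0 ≤ s ∧ ∃ c > 0, ∀ᶠ R in 𝓝[>] 0, ∀ x ∈ msupp μ,
    ballMass μ x R ≤ c * R ^ ((1 - t) * s) * ballMass μ x (R ^ t)}

def lowerSpecSet (μ : Measure X) (t : ℝ) : Set ℝ :=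
  {s | 0 ≤ s ∧ ∃ c > 0, ∀ᶠ R in 𝓝[>] 0, ∀ x ∈ msupp μ,
    c * R ^ ((1 - t) * s) * ballMass μ x (R ^ t) ≤ ballMass μ x R}

noncomputable def upperSpecDim (μ : Measure X) (t : ℝ) : ℝ := sInf (upperSpecSet μ t)

noncomputable def lowerSpecDim (μ : Measure X) (t : ℝ) : ℝ := sSup (lowerSpecSet μ t)

lemma upperEq_eq_upperSpecDim (μ : Measure X) (θ : ℝ) : upperEq μ θ = upperSpecDim μ (1 / θ) := by
  refine congrArg sInf (Set.ext fun s => and_congr_right fun _ =>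
    exists_congr fun c => and_congr_right fun _ => ?_)
  rw [eventually_nhdsGT_zero_iff]
  refine exists_congr fun R₀ => and_congr_right fun _ =>
    ⟨fun h R hR hRR₀ x hx => ?_, fun h x hx R hR hRR₀ => ?_⟩
  · rw [Real.rpow_mul hR.le]; exact h x hx R hR hRR₀
  · rw [← Real.rpow_mul hR.le]; exact h R hR hRR₀ x hx

lemma lowerEq_eq_lowerSpecDim (μ : Measure X) (θ : ℝ) : lowerEq μ θ = lowerSpecDim μ (1 / θ) := by
  refine congrArg sSup (Set.ext fun s => and_congr_right fun _ =>
    exists_congr fun c => and_congr_right fun _ => ?_)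
  rw [eventually_nhdsGT_zero_iff]
  refine exists_congr fun R₀ => and_congr_right fun _ =>
    ⟨fun h R hR hRR₀ x hx => ?_, fun h x hx R hR hRR₀ => ?_⟩
  · rw [Real.rpow_mul hR.le]; exact h x hx R hR hRR₀
  · rw [← Real.rpow_mul hR.le]; exact h R hR hRR₀ x hx

lemma mem_upperHSet_iff {δ s : ℝ} (hδ : 0 < 1 + δ) :
    s ∈ upperHSet μ δ ↔ 0 ≤ s ∧ ∃ c > 0, ∀ᶠ R in 𝓝[>] 0, ∀ x ∈ msupp μ, ∀ r, 0 < r →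
      r ≤ R ^ (1 + δ) → ballMass μ x R ≤ c * (R / r) ^ s * ballMass μ x r := by
  refine and_congr_right fun _ => ⟨fun ⟨c₁, hc₁, c, hc, h⟩ => ⟨c, hc, ?_⟩, fun ⟨c, hc, h⟩ => ?_⟩
  · filter_upwards [self_mem_nhdsWithin, eventually_rpow_le hc₁ hδ] with R hR hRc x hx r hr hrR
      using h x hx r R hr hR hrR hRc
  · obtain ⟨R₀, hR₀, hP⟩ := eventually_nhdsGT_zero_iff.1 h
    exact ⟨R₀ ^ (1 + δ), by positivity, c, hc, fun x hx r R hr hR hrR hRc =>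
      hP R hR ((Real.rpow_le_rpow_iff hR.le hR₀.le hδ).1 hRc) x hx r hr hrR⟩

lemma mem_lowerHSet_iff {δ s : ℝ} (hδ : 0 < 1 + δ) :
    s ∈ lowerHSet μ δ ↔ 0 ≤ s ∧ ∃ c > 0, ∀ᶠ R in 𝓝[>] 0, ∀ x ∈ msupp μ, ∀ r, 0 < r →
      r ≤ R ^ (1 + δ) → c * (R / r) ^ s * ballMass μ x r ≤ ballMass μ x R := by
  refine and_congr_right fun _ => ⟨fun ⟨c₁, hc₁, c, hc, h⟩ => ⟨c, hc, ?_⟩, fun ⟨c, hc, h⟩ => ?_⟩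
  · filter_upwards [self_mem_nhdsWithin, eventually_rpow_le hc₁ hδ] with R hR hRc x hx r hr hrR
      using h x hx r R hr hR hrR hRc
  · obtain ⟨R₀, hR₀, hP⟩ := eventually_nhdsGT_zero_iff.1 h
    exact ⟨R₀ ^ (1 + δ), by positivity, c, hc, fun x hx r R hr hR hrR hRc =>
      hP R hR ((Real.rpow_le_rpow_iff hR.le hR₀.le hδ).1 hRc) x hx r hr hrR⟩

lemma upperHSet_sub_one_subset {t : ℝ} (ht : 0 < t) : upperHSet μ (t - 1) ⊆ upperSpecSet μ t := by
  intro s hs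
  obtain ⟨hs0, c, hc, h⟩ := (mem_upperHSet_iff (by linarith)).1 hs
  refine ⟨hs0, c, hc, ?_⟩
  filter_upwards [h, self_mem_nhdsWithin] with R hR hR0 x hx
  have := hR x hx (R ^ t) (Real.rpow_pos_of_pos hR0 t) (by rw [add_sub_cancel])
  rwa [self_div_rpow_rpow hR0] at this

lemma lowerHSet_sub_one_subset {t : ℝ} (ht : 0 < t) : lowerHSet μ (t - 1) ⊆ lowerSpecSet μ t := by
  intro s hs
  obtain ⟨hs0, c, hc, h⟩ := (mem_lowerHSet_iff (by linarith)).1 hs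
  refine ⟨hs0, c, hc, ?_⟩
  filter_upwards [h, self_mem_nhdsWithin] with R hR hR0 x hx
  have := hR x hx (R ^ t) (Real.rpow_pos_of_pos hR0 t) (by rw [add_sub_cancel])
  rwa [self_div_rpow_rpow hR0] at this

lemma zero_mem_lowerSpecSet [IsFiniteMeasure μ] {t : ℝ} (ht : 1 ≤ t) :
    (0 : ℝ) ∈ lowerSpecSet μ t := by
  refine ⟨le_rfl, 1, one_pos, ?_⟩
  filter_upwards [Ioc_mem_nhdsGT one_pos] with R hR x hx
  simpa using ballMass_mono x (Real.rpow_le_self_of_le_one hR.1.le hR.2 ht)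

lemma zero_mem_lowerHSet [IsFiniteMeasure μ] {δ : ℝ} (hδ : 0 ≤ δ) : (0 : ℝ) ∈ lowerHSet μ δ := by
  refine (mem_lowerHSet_iff (by linarith)).2 ⟨le_rfl, 1, one_pos, ?_⟩
  filter_upwards [Ioc_mem_nhdsGT one_pos] with R hR x hx r hr hrR
  simpa using ballMass_mono x (hrR.trans (Real.rpow_le_self_of_le_one hR.1.le hR.2 (by linarith)))

lemma le_of_mem_lowerSpecSet_of_mem_upperSpecSet [IsFiniteMeasure μ] (hne : (msupp μ).Nonempty)
    {t s s' : ℝ} (ht : 1 < t) (hs : s ∈ lowerSpecSet μ t) (hs' : s' ∈ upperSpecSet μ t) :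
    s ≤ s' := by
  obtain ⟨x, hx⟩ := hne
  obtain ⟨-, c, hc, h⟩ := hs
  obtain ⟨-, c', hc', h'⟩ := hs'
  by_contra! hlt
  obtain ⟨R, hR, hR', hRsmall, hR0⟩ := (h.and (h'.and ((eventually_rpow_le
    (by positivity : 0 < c / (2 * c')) (by nlinarith : 0 < (t - 1) * (s - s'))).and
    self_mem_nhdsWithin))).exists
  have hcmp : c * R ^ ((1 - t) * s) ≤ c' * R ^ ((t - 1) * (s - s')) * R ^ ((1 - t) * s) := by
    refine le_of_mul_le_mul_right ?_ (ballMass_pos hx (Real.rpow_pos_of_pos hR0 t))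
    calc c * R ^ ((1 - t) * s) * ballMass μ x (R ^ t) ≤ ballMass μ x R := hR x hx
      _ ≤ c' * R ^ ((1 - t) * s') * ballMass μ x (R ^ t) := hR' x hx
      _ = _ := by rw [mul_assoc c' (R ^ _) (R ^ _), ← Real.rpow_add hR0]; ring_nf
  have := le_of_mul_le_mul_right hcmp (Real.rpow_pos_of_pos hR0 _)
  have : c' * R ^ ((t - 1) * (s - s')) ≤ c / 2 := by
    calc c' * R ^ ((t - 1) * (s - s')) ≤ c' * (c / (2 * c')) := by gcongr
      _ = c / 2 := by field_simp
  linarith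

-- With empty support every `s ≥ 0` is admissible, and `sSup` of the unbounded `Ici 0` is `0`.
lemma lowerSpecDim_of_msupp_eq_empty (h : msupp μ = ∅) (t : ℝ) : lowerSpecDim μ t = 0 := by
  have : lowerSpecSet μ t = Ici 0 := by
    ext s; simp [lowerSpecSet, h, exists_gt]
  rw [lowerSpecDim, this, Real.sSup_of_not_bddAbove (not_bddAbove_Ici 0)]

lemma dimqL_of_msupp_eq_empty (h : msupp μ = ∅) : dimqL μ = 0 := by
  have : ∀ δ, lowerHSet μ δ = Ici 0 := fun δ => by
    ext s; simp [lowerHSet, h, exists_gt]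
  simp [dimqL, this, Real.sSup_of_not_bddAbove (not_bddAbove_Ici 0)]

lemma eventually_ballMass_le_div_rpow_pow_mul {t s ε : ℝ} (ht : 1 < t)
    (hs : s ∈ upperSpecSet μ t) (hε : 0 < ε) :
    ∀ᶠ R in 𝓝[>] 0, ∀ x ∈ msupp μ, ∀ k : ℕ,
      ballMass μ x R ≤ (R / R ^ t ^ k) ^ (s + ε) * ballMass μ x (R ^ t ^ k) := by
  obtain ⟨-, c, hc, h⟩ := hs
  have hstep : ∀ᶠ R in 𝓝[>] 0, ∀ x ∈ msupp μ,
      ballMass μ x R ≤ (R / R ^ t) ^ (s + ε) * ballMass μ x (R ^ t) := by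
    filter_upwards [h, (tendsto_rpow_neg_nhdsGT_zero (y := (1 - t) * ε)
      (by nlinarith)).eventually_ge_atTop c, self_mem_nhdsWithin] with R hR hcR (hR0 : 0 < R) x hx
    calc ballMass μ x R ≤ c * R ^ ((1 - t) * s) * ballMass μ x (R ^ t) := hR x hx
      _ ≤ R ^ ((1 - t) * ε) * R ^ ((1 - t) * s) * ballMass μ x (R ^ t) := by
        refine mul_le_mul_of_nonneg_right ?_ (ballMass_nonneg μ x _)
        gcongr
      _ = (R / R ^ t) ^ (s + ε) * ballMass μ x (R ^ t) := by
        rw [self_div_rpow_rpow hR0, ← Real.rpow_add hR0]; ring_nf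
  filter_upwards [hstep.forall_Ioc_nhdsGT_zero, Ioc_mem_nhdsGT one_pos] with R hR hR1 x hx k
  exact le_div_rpow_pow_mul_of_forall_Ioc ht.le hR1.1 hR1.2 (fun ρ hρ => hR ρ hρ x hx) k

lemma eventually_div_rpow_pow_mul_le_ballMass {t s ε : ℝ} (ht : 1 < t)
    (hs : s ∈ lowerSpecSet μ t) (hε : 0 < ε) :
    ∀ᶠ R in 𝓝[>] 0, ∀ x ∈ msupp μ, ∀ k : ℕ,
      (R / R ^ t ^ k) ^ (s - ε) * ballMass μ x (R ^ t ^ k) ≤ ballMass μ x R := by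
  obtain ⟨-, c, hc, h⟩ := hs
  have hstep : ∀ᶠ R in 𝓝[>] 0, ∀ x ∈ msupp μ,
      (R / R ^ t) ^ (s - ε) * ballMass μ x (R ^ t) ≤ ballMass μ x R := by
    filter_upwards [h, eventually_rpow_le hc (p := (t - 1) * ε) (by nlinarith),
      self_mem_nhdsWithin] with R hR hRc (hR0 : 0 < R) x hx
    calc (R / R ^ t) ^ (s - ε) * ballMass μ x (R ^ t)
        = R ^ ((t - 1) * ε) * R ^ ((1 - t) * s) * ballMass μ x (R ^ t) := by
          rw [self_div_rpow_rpow hR0, ← Real.rpow_add hR0]; ring_nf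
      _ ≤ c * R ^ ((1 - t) * s) * ballMass μ x (R ^ t) := by
        refine mul_le_mul_of_nonneg_right ?_ (ballMass_nonneg μ x _)
        gcongr
      _ ≤ ballMass μ x R := hR x hx
  filter_upwards [hstep.forall_Ioc_nhdsGT_zero, Ioc_mem_nhdsGT one_pos] with R hR hR1 x hx k
  -- the upper iteration lemma, applied to `-ballMass`
  have := le_div_rpow_pow_mul_of_forall_Ioc (F := fun ρ => -ballMass μ x ρ) ht.le hR1.1 hR1.2
    (fun ρ hρ => by simpa only [mul_neg, neg_le_neg_iff] using hR ρ hρ x hx) k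
  simpa only [mul_neg, neg_le_neg_iff] using this

lemma mem_lowerHSet_of_mem_lowerSpecSet [IsFiniteMeasure μ] {t δ s s' ξ D : ℝ} (ht : 1 < t)
    (hδ : 0 < δ) (hs : s ∈ lowerSpecSet μ t) (hsD : s ≤ D) (hξ : 0 < ξ) (hs' : 0 ≤ s')
    (hss' : s' + (t - 1) * D * ((1 + δ) / δ) + ξ ≤ s) : s' ∈ lowerHSet μ δ := by
  have hD : 0 ≤ D := hs.1.trans hsD
  have hloss : (s - ξ) * (t - 1) * ((1 + δ) / δ) ≤ (t - 1) * D * ((1 + δ) / δ) := by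
    have : 0 ≤ (t - 1) * ((1 + δ) / δ) := by have := sub_pos.2 ht; positivity
    nlinarith
  have hσ : 0 ≤ s - ξ := by nlinarith
  refine (mem_lowerHSet_iff (by linarith)).2 ⟨hs', 1, one_pos, ?_⟩
  filter_upwards [eventually_div_rpow_pow_mul_le_ballMass ht hs hξ, Ioo_mem_nhdsGT one_pos]
    with R hiter ⟨hR0, hR1⟩ x hx r hr hrR
  have hrR' : r ≤ R := hrR.trans (Real.rpow_le_self_of_le_one hR0.le hR1.le (by linarith))
  obtain ⟨k, hk, hk'⟩ := exists_rpow_pow_lt_le hR0 hR1 hr hrR' ht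
  rw [pow_succ, Real.rpow_mul hR0.le] at hk
  calc 1 * (R / r) ^ s' * ballMass μ x r
      ≤ (R / r) ^ ((s - ξ) - (s - ξ) * (t - 1) * ((1 + δ) / δ)) * ballMass μ x r := by
        rw [one_mul]
        refine mul_le_mul_of_nonneg_right ?_ (ballMass_nonneg μ x r)
        exact Real.rpow_le_rpow_of_exponent_le ((one_le_div hr).2 hrR') (by linarith)
    _ ≤ (R / R ^ t ^ k) ^ (s - ξ) * ballMass μ x (R ^ t ^ k) :=
        mul_le_mul (div_rpow_le_div_rpow_of_rpow_lt hr hk' hk hR0 hrR hδ ht.le hσ)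
          (ballMass_mono x hk') (ballMass_nonneg μ x r) (by positivity)
    _ ≤ ballMass μ x R := hiter x hx k

def HasQuasiAssouadBound (μ : Measure X) (D : ℝ) : Prop :=
  ∀ δ : ℝ, 0 < δ → ∃ s ∈ upperHSet μ δ, s ≤ D

namespace HasQuasiAssouadBound

variable {D : ℝ}

lemma nonneg (hD : HasQuasiAssouadBound μ D) : 0 ≤ D := by
  obtain ⟨s, hs, hsD⟩ := hD 1 one_pos
  exact hs.1.trans hsD

lemma upperSpecSet_nonempty (hD : HasQuasiAssouadBound μ D) {t : ℝ} (ht : 1 < t) :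
    (upperSpecSet μ t).Nonempty := by
  obtain ⟨s, hs, -⟩ := hD (t - 1) (sub_pos.2 ht)
  exact ⟨s, upperHSet_sub_one_subset (by linarith) hs⟩

lemma le_of_mem_lowerSpecSet [IsFiniteMeasure μ] (hD : HasQuasiAssouadBound μ D)
    (hne : (msupp μ).Nonempty) {t s : ℝ} (ht : 1 < t) (hs : s ∈ lowerSpecSet μ t) : s ≤ D := by
  obtain ⟨s', hs', hs'D⟩ := hD (t - 1) (sub_pos.2 ht)
  exact (le_of_mem_lowerSpecSet_of_mem_upperSpecSet hne ht hs
    (upperHSet_sub_one_subset (by linarith) hs')).trans hs'D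

lemma bddAbove_lowerSpecSet [IsFiniteMeasure μ] (hD : HasQuasiAssouadBound μ D)
    (hne : (msupp μ).Nonempty) {t : ℝ} (ht : 1 < t) : BddAbove (lowerSpecSet μ t) :=
  ⟨D, fun _ hs => hD.le_of_mem_lowerSpecSet hne ht hs⟩

lemma bddAbove_lowerHSet [IsFiniteMeasure μ] (hD : HasQuasiAssouadBound μ D)
    (hne : (msupp μ).Nonempty) {δ : ℝ} (hδ : 0 < δ) : BddAbove (lowerHSet μ δ) := by
  have hsub := lowerHSet_sub_one_subset (μ := μ) (t := 1 + δ) (by linarith)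
  rw [add_sub_cancel_left] at hsub
  exact (hD.bddAbove_lowerSpecSet hne (by linarith)).mono hsub

lemma eventually_ballMass_le [IsFiniteMeasure μ] (hD : HasQuasiAssouadBound μ D) {η : ℝ}
    (hη : 0 < η) :
    ∃ C > 0, ∀ᶠ R in 𝓝[>] 0, ∀ x ∈ msupp μ, ∀ r, 0 < r → r ≤ R →
      ballMass μ x R ≤ C * R ^ (-η) * (R / r) ^ D * ballMass μ x r := by
  have hD0 := hD.nonneg
  set δ := η / (D + 1)
  have hδ : 0 < δ := by positivity
  obtain ⟨s, hs, hsD⟩ := hD δ hδ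
  obtain ⟨hs0, C, hC, h⟩ := (mem_upperHSet_iff (by positivity)).1 hs
  have hδs : δ * s ≤ η := by
    calc δ * s ≤ δ * (D + 1) := by gcongr; linarith
      _ = η := div_mul_cancel₀ _ (by positivity)
  refine ⟨C, hC, ?_⟩
  filter_upwards [h, Ioc_mem_nhdsGT one_pos] with R hR hR1 x hx r hr hrR
  have hRη : 1 ≤ R ^ (-η) := Real.one_le_rpow_of_pos_of_le_one_of_nonpos hR1.1 hR1.2 (by linarith)
  have hRr : 1 ≤ R / r := (one_le_div hr).2 hrR
  -- For `R ^ (1 + δ) < r ≤ R`, compare with `r = R ^ (1 + δ)`, at the price `R ^ (-δ s) ≤ R ^ (-η)`.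
  rcases le_or_gt r (R ^ (1 + δ)) with hsmall | hlarge
  · calc ballMass μ x R ≤ C * (R / r) ^ s * ballMass μ x r := hR x hx r hr hsmall
      _ ≤ C * R ^ (-η) * (R / r) ^ D * ballMass μ x r := by
        refine mul_le_mul_of_nonneg_right ?_ (ballMass_nonneg μ x r)
        rw [mul_assoc]
        gcongr
        calc (R / r) ^ s = 1 * (R / r) ^ s := (one_mul _).symm
          _ ≤ R ^ (-η) * (R / r) ^ D := by gcongr
  · calc ballMass μ x R
        ≤ C * (R / R ^ (1 + δ)) ^ s * ballMass μ x (R ^ (1 + δ)) :=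
          hR x hx _ (Real.rpow_pos_of_pos hR1.1 _) le_rfl
      _ ≤ C * R ^ (-η) * 1 * ballMass μ x r := by
        refine mul_le_mul ?_ (ballMass_mono x hlarge.le) (ballMass_nonneg μ x _) (by positivity)
        rw [mul_one, self_div_rpow_rpow hR1.1]
        exact mul_le_mul_of_nonneg_left
          (Real.rpow_le_rpow_of_exponent_ge hR1.1 hR1.2 (by linarith)) hC.le
      _ ≤ C * R ^ (-η) * (R / r) ^ D * ballMass μ x r := by
        refine mul_le_mul_of_nonneg_right ?_ (ballMass_nonneg μ x r)
        gcongr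
        exact Real.one_le_rpow hRr hD0

lemma eventually_ballMass_rpow_le [IsFiniteMeasure μ] (hD : HasQuasiAssouadBound μ D)
    {a b ξ : ℝ} (ha : 1 ≤ a) (hξ : 0 < ξ) :
    ∃ C > 0, ∀ᶠ R in 𝓝[>] 0, ∀ x ∈ msupp μ,
      ballMass μ x (R ^ a) ≤ C * R ^ (-(D * |a - b| + ξ)) * ballMass μ x (R ^ b) := by
  obtain ⟨C, hC, h⟩ := hD.eventually_ballMass_le (η := ξ / a) (by positivity)
  refine ⟨max C 1, by positivity, ?_⟩
  filter_upwards [h.forall_Ioc_nhdsGT_zero, Ioc_mem_nhdsGT one_pos] with R hR hR1 x hx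
  have hR0 := hR1.1
  rcases le_total a b with hab | hba
  · calc ballMass μ x (R ^ a)
        ≤ C * (R ^ a) ^ (-(ξ / a)) * (R ^ a / R ^ b) ^ D * ballMass μ x (R ^ b) :=
          hR (R ^ a) ⟨Real.rpow_pos_of_pos hR0 a, Real.rpow_le_self_of_le_one hR0.le hR1.2 ha⟩
            x hx (R ^ b) (Real.rpow_pos_of_pos hR0 b)
            (Real.rpow_le_rpow_of_exponent_ge hR0 hR1.2 hab)
      _ = C * R ^ (-(D * |a - b| + ξ)) * ballMass μ x (R ^ b) := by
        rw [abs_of_nonpos (sub_nonpos.2 hab), ← Real.rpow_mul hR0.le, ← Real.rpow_sub hR0,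
          ← Real.rpow_mul hR0.le, mul_assoc C, ← Real.rpow_add hR0]
        congr 3
        field_simp
        ring
      _ ≤ max C 1 * R ^ (-(D * |a - b| + ξ)) * ballMass μ x (R ^ b) := by
        refine mul_le_mul_of_nonneg_right ?_ (ballMass_nonneg μ x _)
        gcongr
        exact le_max_left _ _
  · have hloss : 1 ≤ R ^ (-(D * |a - b| + ξ)) :=
      Real.one_le_rpow_of_pos_of_le_one_of_nonpos hR0 hR1.2
        (by have := hD.nonneg; have := abs_nonneg (a - b); nlinarith)
    calc ballMass μ x (R ^ a) ≤ 1 * 1 * ballMass μ x (R ^ b) := by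
          rw [one_mul, one_mul]
          exact ballMass_mono x (Real.rpow_le_rpow_of_exponent_ge hR0 hR1.2 hba)
      _ ≤ max C 1 * R ^ (-(D * |a - b| + ξ)) * ballMass μ x (R ^ b) := by
        refine mul_le_mul_of_nonneg_right ?_ (ballMass_nonneg μ x _)
        gcongr
        exact le_max_right _ _

lemma mem_upperSpecSet_of_mem [IsFiniteMeasure μ] (hD : HasQuasiAssouadBound μ D)
    {t t' s s' ξ : ℝ} (ht : 1 ≤ t) (hs : s ∈ upperSpecSet μ t) (hξ : 0 < ξ) (hs' : 0 ≤ s')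
    (hss' : (t - 1) * s + D * |t - t'| + ξ ≤ (t' - 1) * s') : s' ∈ upperSpecSet μ t' := by
  obtain ⟨-, c, hc, h⟩ := hs
  obtain ⟨C, hC, hcmp⟩ := hD.eventually_ballMass_rpow_le (b := t') ht hξ
  refine ⟨hs', c * C, by positivity, ?_⟩
  filter_upwards [h, hcmp, Ioc_mem_nhdsGT one_pos] with R hR hRcmp ⟨hR0, hR1⟩ x hx
  calc ballMass μ x R ≤ c * R ^ ((1 - t) * s) * ballMass μ x (R ^ t) := hR x hx
    _ ≤ c * R ^ ((1 - t) * s) * (C * R ^ (-(D * |t - t'| + ξ)) * ballMass μ x (R ^ t')) := by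
        gcongr; exact hRcmp x hx
    _ = c * C * R ^ ((1 - t) * s + -(D * |t - t'| + ξ)) * ballMass μ x (R ^ t') := by
        rw [Real.rpow_add hR0]; ring
    _ ≤ c * C * R ^ ((1 - t') * s') * ballMass μ x (R ^ t') := by
        refine mul_le_mul_of_nonneg_right ?_ (ballMass_nonneg μ x _)
        exact mul_le_mul_of_nonneg_left
          (Real.rpow_le_rpow_of_exponent_ge hR0 hR1 (by linarith)) (by positivity)

lemma mem_lowerSpecSet_of_mem [IsFiniteMeasure μ] (hD : HasQuasiAssouadBound μ D)
    {t t' s s' ξ : ℝ} (ht' : 1 ≤ t') (hs : s ∈ lowerSpecSet μ t) (hξ : 0 < ξ) (hs' : 0 ≤ s')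
    (hss' : (t' - 1) * s' + D * |t - t'| + ξ ≤ (t - 1) * s) : s' ∈ lowerSpecSet μ t' := by
  obtain ⟨-, c, hc, h⟩ := hs
  obtain ⟨C, hC, hcmp⟩ := hD.eventually_ballMass_rpow_le (b := t) ht' hξ
  refine ⟨hs', c / C, by positivity, ?_⟩
  filter_upwards [h, hcmp, Ioc_mem_nhdsGT one_pos] with R hR hRcmp ⟨hR0, hR1⟩ x hx
  rw [abs_sub_comm] at hss'
  calc c / C * R ^ ((1 - t') * s') * ballMass μ x (R ^ t')
      ≤ c / C * R ^ ((1 - t') * s') * (C * R ^ (-(D * |t' - t| + ξ)) * ballMass μ x (R ^ t)) := by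
        gcongr; exact hRcmp x hx
    _ = c * R ^ ((1 - t') * s' + -(D * |t' - t| + ξ)) * ballMass μ x (R ^ t) := by
        rw [Real.rpow_add hR0]; field_simp
    _ ≤ c * R ^ ((1 - t) * s) * ballMass μ x (R ^ t) := by
        refine mul_le_mul_of_nonneg_right ?_ (ballMass_nonneg μ x _)
        exact mul_le_mul_of_nonneg_left
          (Real.rpow_le_rpow_of_exponent_ge hR0 hR1 (by linarith)) hc.le
    _ ≤ ballMass μ x R := hR x hx

lemma mem_upperHSet_of_mem_upperSpecSet [IsFiniteMeasure μ] (hD : HasQuasiAssouadBound μ D)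
    {t δ s s' ξ : ℝ} (ht : 1 < t) (hδ : 0 < δ) (hs : s ∈ upperSpecSet μ t) (hξ : 0 < ξ)
    (hss' : s + (t - 1) * D * ((1 + δ) / δ) + ξ ≤ s') : s' ∈ upperHSet μ δ := by
  set κ := (1 + δ) / δ
  have hκ : 0 < κ := by positivity
  have hD0 := hD.nonneg
  have hexp : s + ξ / 2 + (ξ / 2 / κ + (t - 1) * D) * κ = s + (t - 1) * D * κ + ξ := by
    field_simp; ring
  obtain ⟨C, hC, hstar⟩ := hD.eventually_ballMass_le (η := ξ / 2 / κ) (by positivity)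
  have hs' : 0 ≤ s' := by
    have : 0 ≤ (t - 1) * D * κ := by have := sub_pos.2 ht; positivity
    linarith [hs.1]
  refine (mem_upperHSet_iff (by linarith)).2 ⟨hs', C, hC, ?_⟩
  filter_upwards [eventually_ballMass_le_div_rpow_pow_mul ht hs (half_pos hξ),
    hstar.forall_Ioc_nhdsGT_zero, Ioo_mem_nhdsGT one_pos]
    with R hiter hstarR ⟨hR0, hR1⟩ x hx r hr hrR
  have hrR' : r ≤ R := hrR.trans (Real.rpow_le_self_of_le_one hR0.le hR1.le (by linarith))
  -- iterate down to the last scale `R ^ t ^ k ≥ r`, then pass to `r` by the quasi-Assouad bound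
  obtain ⟨k, hk, hk'⟩ := exists_rpow_pow_lt_le hR0 hR1 hr hrR' ht
  rw [pow_succ, Real.rpow_mul hR0.le] at hk
  have hρR : R ^ t ^ k ≤ R := Real.rpow_le_self_of_le_one hR0.le hR1.le (one_le_pow₀ ht.le)
  calc ballMass μ x R ≤ (R / R ^ t ^ k) ^ (s + ξ / 2) * ballMass μ x (R ^ t ^ k) := hiter x hx k
    _ ≤ (R / R ^ t ^ k) ^ (s + ξ / 2) * (C * (R ^ t ^ k) ^ (-(ξ / 2 / κ)) *
          (R ^ t ^ k / r) ^ D * ballMass μ x r) := by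
        gcongr; exact hstarR _ ⟨hr.trans_le hk', hρR⟩ x hx r hr hk'
    _ = C * ((R / R ^ t ^ k) ^ (s + ξ / 2) * (R ^ t ^ k) ^ (-(ξ / 2 / κ)) *
          (R ^ t ^ k / r) ^ D) * ballMass μ x r := by ring
    _ ≤ C * (R / r) ^ (s + ξ / 2 + (ξ / 2 / κ + (t - 1) * D) * κ) * ballMass μ x r := by
        refine mul_le_mul_of_nonneg_right ?_ (ballMass_nonneg μ x r)
        gcongr
        exact div_rpow_mul_rpow_mul_div_rpow_le hr hk' hk hR0 hrR hδ ht.le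
          (by linarith [hs.1]) (by positivity) hD0
    _ ≤ C * (R / r) ^ s' * ballMass μ x r := by
        refine mul_le_mul_of_nonneg_right ?_ (ballMass_nonneg μ x r)
        gcongr
        · exact (one_le_div hr).2 hrR'
        · linarith

lemma continuousOn_upperSpecDim [IsFiniteMeasure μ] (hD : HasQuasiAssouadBound μ D) :
    ContinuousOn (upperSpecDim μ) (Ioi 1) := by
  refine continuousOn_of_sub_one_mul_le hD.nonneg fun t ht t' ht' => ?_
  rw [Real.dist_eq, abs_sub_comm]
  exact mul_csInf_le_of_forall_mem (hD.upperSpecSet_nonempty ht') (fun s hs => hs.1)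
    ⟨0, fun s hs => hs.1⟩ (sub_pos.2 ht') (sub_pos.2 ht) (mul_nonneg hD.nonneg (abs_nonneg _))
    fun s hs ξ hξ s' hs' h => hD.mem_upperSpecSet_of_mem (le_of_lt ht') hs hξ hs' h

lemma continuousOn_lowerSpecDim [IsFiniteMeasure μ] (hD : HasQuasiAssouadBound μ D) :
    ContinuousOn (lowerSpecDim μ) (Ioi 1) := by
  rcases (msupp μ).eq_empty_or_nonempty with h | hne
  · exact continuousOn_const.congr fun t _ => lowerSpecDim_of_msupp_eq_empty h t
  refine continuousOn_of_sub_one_mul_le hD.nonneg fun t ht t' ht' => ?_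
  rw [Real.dist_eq]
  exact mul_csSup_le_of_forall_mem ⟨0, zero_mem_lowerSpecSet (le_of_lt ht)⟩
    (hD.bddAbove_lowerSpecSet hne ht') (zero_mem_lowerSpecSet (le_of_lt ht')) (sub_pos.2 ht)
    (sub_pos.2 ht') fun s hs ξ hξ s' hs' h => hD.mem_lowerSpecSet_of_mem (le_of_lt ht') hs hξ hs' h

lemma tendsto_upperSpecDim [IsFiniteMeasure μ] (hD : HasQuasiAssouadBound μ D) :
    Tendsto (upperSpecDim μ) (𝓝[>] 1) (𝓝 (dimqA μ)) := by
  have hbdd : BddAbove (range fun δ : {δ : ℝ // 0 < δ} => sInf (upperHSet μ δ.1)) := by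
    refine ⟨D, ?_⟩
    rintro _ ⟨δ, rfl⟩
    obtain ⟨s, hs, hsD⟩ := hD δ.1 δ.2
    exact (csInf_le ⟨0, fun _ h => h.1⟩ hs).trans hsD
  refine tendsto_nhdsGT_one_of_le_of_forall_lt (fun t ht => ?_) fun a ha => ?_
  · obtain ⟨s, hs, -⟩ := hD (t - 1) (sub_pos.2 ht)
    calc upperSpecDim μ t ≤ sInf (upperHSet μ (t - 1)) :=
          csInf_le_csInf ⟨0, fun _ h => h.1⟩ ⟨s, hs⟩ (upperHSet_sub_one_subset (by linarith))
      _ ≤ dimqA μ := le_ciSup hbdd ⟨t - 1, sub_pos.2 ht⟩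
  · have : Nonempty {δ : ℝ // 0 < δ} := ⟨⟨1, one_pos⟩⟩
    obtain ⟨δ, hlt⟩ := exists_lt_of_lt_ciSup ha
    refine ⟨_, hlt, D * ((1 + δ) / δ), fun t ht => ?_⟩
    have : 1 * sInf (upperHSet μ δ) ≤ 1 * upperSpecDim μ t + (t - 1) * D * ((1 + δ) / δ) :=
      mul_csInf_le_of_forall_mem (hD.upperSpecSet_nonempty ht) (fun s hs => hs.1)
        ⟨0, fun _ h => h.1⟩ one_pos one_pos
        (by have := hD.nonneg; have := sub_pos.2 ht; have := δ.2; positivity)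
        fun s hs ξ hξ s' _ h => hD.mem_upperHSet_of_mem_upperSpecSet ht δ.2 hs hξ (by linarith)
    linarith

lemma tendsto_lowerSpecDim [IsFiniteMeasure μ] (hD : HasQuasiAssouadBound μ D) :
    Tendsto (lowerSpecDim μ) (𝓝[>] 1) (𝓝 (dimqL μ)) := by
  rcases (msupp μ).eq_empty_or_nonempty with h | hne
  · rw [dimqL_of_msupp_eq_empty h]
    exact tendsto_const_nhds.congr fun t => (lowerSpecDim_of_msupp_eq_empty h t).symm
  have hbdd : BddBelow (range fun δ : {δ : ℝ // 0 < δ} => sSup (lowerHSet μ δ.1)) := by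
    refine ⟨0, ?_⟩
    rintro _ ⟨δ, rfl⟩
    exact Real.sSup_nonneg fun _ h => h.1
  refine tendsto_nhdsGT_one_of_ge_of_forall_gt (fun t ht => ?_) fun a ha => ?_
  · calc dimqL μ ≤ sSup (lowerHSet μ (t - 1)) := ciInf_le hbdd ⟨t - 1, sub_pos.2 ht⟩
      _ ≤ lowerSpecDim μ t :=
          csSup_le_csSup (hD.bddAbove_lowerSpecSet hne ht)
            ⟨0, zero_mem_lowerHSet (sub_nonneg.2 ht.le)⟩ (lowerHSet_sub_one_subset (by linarith))
  · have : Nonempty {δ : ℝ // 0 < δ} := ⟨⟨1, one_pos⟩⟩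
    obtain ⟨δ, hlt⟩ := exists_lt_of_ciInf_lt ha
    refine ⟨_, hlt, D * ((1 + δ) / δ), fun t ht => ?_⟩
    have : 1 * lowerSpecDim μ t ≤ 1 * sSup (lowerHSet μ δ) + (t - 1) * D * ((1 + δ) / δ) :=
      mul_csSup_le_of_forall_mem ⟨0, zero_mem_lowerSpecSet (le_of_lt ht)⟩
        (hD.bddAbove_lowerHSet hne δ.2) (zero_mem_lowerHSet δ.2.le) one_pos one_pos
        fun s hs ξ hξ s' hs' h =>
          mem_lowerHSet_of_mem_lowerSpecSet ht δ.2 hs (hD.le_of_mem_lowerSpecSet hne ht hs) hξ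
            hs' (by linarith)
    linarith

end HasQuasiAssouadBound

end

theorem assouad_spectrum_continuous_and_limits_general
    {X : Type*} [MetricSpace X] [MeasurableSpace X]
    (μ : Measure X) [IsProbabilityMeasure μ]
    (hqA : ∃ D : ℝ, ∀ δ : ℝ, 0 < δ → ∃ s ∈ upperHSet μ δ, s ≤ D) :
    ContinuousOn (fun θ => lowerEq μ θ) (Set.Ioo 0 1) ∧
    ContinuousOn (fun θ => upperEq μ θ) (Set.Ioo 0 1) ∧
    Tendsto (fun θ => lowerEq μ θ) (nhdsWithin 1 (Set.Ioo 0 1)) (nhds (dimqL μ)) ∧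
    Tendsto (fun θ => upperEq μ θ) (nhdsWithin 1 (Set.Ioo 0 1)) (nhds (dimqA μ)) := by
  obtain ⟨D, hD⟩ : ∃ D, HasQuasiAssouadBound μ D := hqA
  have hmaps : MapsTo (fun θ : ℝ => 1 / θ) (Ioo 0 1) (Ioi 1) :=
    fun θ hθ => one_lt_one_div hθ.1 hθ.2
  have hinv : ContinuousOn (fun θ : ℝ => 1 / θ) (Ioo 0 1) :=
    continuousOn_const.div continuousOn_id fun θ hθ => hθ.1.ne'
  have hlim : Tendsto (fun θ : ℝ => 1 / θ) (𝓝[Ioo 0 1] 1) (𝓝[>] 1) := by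
    refine tendsto_nhdsWithin_iff.2 ⟨?_, eventually_mem_nhdsWithin.mono hmaps⟩
    have : ContinuousAt (fun θ : ℝ => 1 / θ) 1 := continuousAt_const.div continuousAt_id one_ne_zero
    simpa using this.tendsto.mono_left nhdsWithin_le_nhds
  simp only [upperEq_eq_upperSpecDim, lowerEq_eq_lowerSpecDim]
  exact ⟨hD.continuousOn_lowerSpecDim.comp hinv hmaps,
    hD.continuousOn_upperSpecDim.comp hinv hmaps,
    hD.tendsto_lowerSpecDim.comp hlim, hD.tendsto_upperSpecDim.comp hlim⟩

theorem assouad_spectrum_continuous_and_limits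
    {X : Type*} [MetricSpace X] [MeasurableSpace X] [BorelSpace X]
    (μ : Measure X) [IsProbabilityMeasure μ] (hcpt : IsCompact (msupp μ))
    (hqA : ∃ D : ℝ, ∀ δ : ℝ, 0 < δ → ∃ s ∈ upperHSet μ δ, s ≤ D) :
    ContinuousOn (fun θ => lowerEq μ θ) (Set.Ioo 0 1) ∧
    ContinuousOn (fun θ => upperEq μ θ) (Set.Ioo 0 1) ∧
    Tendsto (fun θ => lowerEq μ θ) (nhdsWithin 1 (Set.Ioo 0 1)) (nhds (dimqL μ)) ∧
    Tendsto (fun θ => upperEq μ θ) (nhdsWithin 1 (Set.Ioo 0 1)) (nhds (dimqA μ)) :=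
  assouad_spectrum_continuous_and_limits_general μ hqA
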